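/- arXiv:0709.3316 — 2 statements merged into one kernel-verified Lean document; each statement's English description precedes it below -/
import Mathlib

section
/- Let β > 0 and p, d nonnegative integers with p ≥ 1. The probability Φ_β(p,d) that the β-biased monotonic random walk starting at the origin crosses the line y = px + d satisfies Φ_β(p,d) = Φ_β(p,0)^{d+1}. -/
/-- A monotonic lattice path with `L` steps is encoded as `f : Fin L → Bool`,
where `true` is an up-step `(0,1)` and `false` is a right-step `(1,0)`.
`upsIn f k` is the number of up-steps among the first `k` steps. -/
def upsIn {L : ℕ} (f : Fin L → Bool) (k : ℕ) : ℕ :=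
  (Finset.univ.filter (fun i : Fin L => (i : ℕ) < k ∧ f i = true)).card

/-- The number of right-steps among the first `k` steps. -/
def rightsIn {L : ℕ} (f : Fin L → Bool) (k : ℕ) : ℕ :=
  (Finset.univ.filter (fun i : Fin L => (i : ℕ) < k ∧ f i = false)).card

/-- `weakCount p d n` is the number of monotonic lattice paths from `(0,0)` to
`(n, p*n + d)` all of whose lattice points lie weakly below the line `y = p*x + d`. -/
noncomputable def weakCount (p d n : ℕ) : ℕ :=
  Nat.card {f : Fin ((p + 1) * n + d) → Bool //
    upsIn f ((p + 1) * n + d) = p * n + d ∧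
    ∀ k ≤ (p + 1) * n + d, upsIn f k ≤ p * rightsIn f k + d}

/-- `strictCount p d n` is the number of monotonic lattice paths from `(0,0)` to
`(n, p*n + d)` all of whose lattice points, except the endpoints, lie strictly below
the line `y = p*x + d` (with the convention `strictCount p 0 0 = 0`). -/
noncomputable def strictCount (p d n : ℕ) : ℕ :=
  if n = 0 ∧ d = 0 then 0 else
  Nat.card {f : Fin ((p + 1) * n + d) → Bool //
    upsIn f ((p + 1) * n + d) = p * n + d ∧
    ∀ k, 0 < k → k < (p + 1) * n + d → upsIn f k < p * rightsIn f k + d}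

/-- `crossProb β p d` is the probability `Φ_β(p,d)` that the `β`-biased monotonic random
walk starting at the origin (moving right with probability `1/(β+1)` and up with
probability `β/(β+1)`) crosses the line `y = p*x + d`, i.e. meets a lattice point
`(n, p*n + d + 1)`.  Decomposing by the first lattice point above the line, this
probability equals `∑ₙ S(n,d) β^{pn+d+1}/(β+1)^{pn+n+d+1}`, where `S(n,d) = weakCount p d n`. -/
noncomputable def crossProb (β : ℝ) (p d : ℕ) : ℝ :=
  ∑' n : ℕ, (weakCount p d n : ℝ) * β ^ (p * n + d + 1) / (β + 1) ^ ((p + 1) * n + d + 1)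

/-- `meetProb β p d` is the probability `Ψ_β(p,d)` that the `β`-biased monotonic random
walk starting at the origin meets a lattice point on the line `y = p*x + d` after
departure.  For `d > 0`, decomposing by the first such lattice point `(n, p*n+d)` (reached
by a path strictly below the line except at its endpoint), this probability equals
`∑ₙ T(n,d) β^{pn+d}/(β+1)^{pn+n+d}`; for `d = 0`, by the reflection symmetry of first
meeting points it equals `2 ∑ₙ N(p,n) β^{pn}/(β+1)^{pn+n}`. -/
noncomputable def meetProb (β : ℝ) (p d : ℕ) : ℝ :=
  if d = 0 then 2 * ∑' n : ℕ, (strictCount p 0 n : ℝ) * β ^ (p * n) / (β + 1) ^ ((p + 1) * n)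
  else ∑' n : ℕ, (strictCount p d n : ℝ) * β ^ (p * n + d) / (β + 1) ^ ((p + 1) * n + d)

/-!
Encode a path as a list of steps (`true` = up) and measure its position by the slack
`p · #right − #up`, so that staying weakly below `y = px + d` means that every prefix has
slack `≥ -d`. Up-steps lower the slack by exactly one, so a path counted by `S(n, d + 1)`
first reaches slack `-1` by an up-step, and splitting it there gives a unique decomposition
into a path counted by `S(i, 0)`, that up-step, and a path counted by `S(j, d)` with
`i + j = n`. Weighting paths by the step probabilities turns this convolution into
`Φ(p, d + 1) = Φ(p, 0) Φ(p, d)`. The series are summed in `ℝ≥0∞`, where the Cauchy product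
needs no summability and `toReal` commutes with powers.
-/

open Finset ENNReal

theorem List.prefix_append_iff {α : Type*} {l l₁ l₂ : List α} :
    l <+: l₁ ++ l₂ ↔ l <+: l₁ ∨ ∃ t, l = l₁ ++ t ∧ t <+: l₂ := by
  refine ⟨fun h => ?_, ?_⟩
  · rcases prefix_or_prefix_of_prefix h (prefix_append l₁ l₂) with h' | ⟨t, rfl⟩
    · exact .inl h'
    · exact .inr ⟨t, rfl, (prefix_append_right_inj l₁).mp h⟩
  · rintro (h | ⟨t, rfl, ht⟩)
    · exact prefix_append_of_prefix h
    · exact (prefix_append_right_inj l₁).mpr ht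

theorem List.count_take_ofFn {L : ℕ} (f : Fin L → Bool) (b : Bool) (k : ℕ) :
    ((ofFn f).take k).count b = #{i : Fin L | (i : ℕ) < k ∧ f i = b} := by
  have hcount : ∀ l : List Bool, l.count b = (l.map fun x => if x = b then 1 else 0).sum := by
    intro l
    induction l with
    | nil => simp
    | cons a l ih => simp [count_cons, ih, add_comm]
  rw [hcount, map_take, map_ofFn, sum_take_ofFn, ← Finset.filter_filter, Finset.card_filter]
  rfl

theorem Nat.card_subtype_ofFn {α : Type*} {L : ℕ} (P : List α → Prop)
    (hP : ∀ l, P l → l.length = L) :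
    Nat.card {f : Fin L → α // P (List.ofFn f)} = Nat.card {l // P l} := by
  refine Nat.card_eq_of_bijective (fun f => ⟨List.ofFn f.1, f.2⟩) ⟨fun f g h => ?_, ?_⟩
  · exact Subtype.ext (List.ofFn_injective (congrArg Subtype.val h))
  · rintro ⟨l, hl⟩
    obtain rfl := hP l hl
    exact ⟨⟨l.get, by simpa using hl⟩, by simp⟩

theorem ENNReal.tsum_mul_tsum_eq_tsum_sum_antidiagonal (f g : ℕ → ℝ≥0∞) :
    (∑' n, f n) * ∑' n, g n = ∑' n, ∑ x ∈ antidiagonal n, f x.1 * g x.2 := by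
  calc (∑' n, f n) * ∑' n, g n = ∑' x : ℕ × ℕ, f x.1 * g x.2 := by
        rw [ENNReal.tsum_prod', ← ENNReal.tsum_mul_right]
        exact tsum_congr fun m => ENNReal.tsum_mul_left.symm
    _ = ∑' y : Σ n, antidiagonal n, f y.2.1.1 * g y.2.1.2 :=
        (HasAntidiagonal.sigmaAntidiagonalEquivProd.tsum_eq fun x => f x.1 * g x.2).symm
    _ = ∑' n, ∑ x ∈ antidiagonal n, f x.1 * g x.2 := by
        rw [ENNReal.tsum_sigma']
        simp_rw [tsum_fintype, sum_coe_sort (antidiagonal _) fun x => f x.1 * g x.2]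

namespace LatticePath

open List

def slack (p : ℕ) (l : List Bool) : ℤ := p * l.count false - l.count true

variable {p : ℕ}

@[simp] lemma slack_nil : slack p [] = 0 := by simp [slack]

@[simp] lemma slack_append (l₁ l₂ : List Bool) :
    slack p (l₁ ++ l₂) = slack p l₁ + slack p l₂ := by
  simp only [slack, count_append]
  push_cast
  ring

@[simp] lemma slack_cons (b : Bool) (l : List Bool) :
    slack p (b :: l) = (if b then -1 else (p : ℤ)) + slack p l := by
  cases b <;> simp [slack] <;> ring

/-- The path `l` goes from `(0, 0)` to `(n, p * n + d)` weakly below `y = p * x + d`. -/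
def IsWeakPath (p d n : ℕ) (l : List Bool) : Prop :=
  l.count false = n ∧ slack p l = -d ∧ ∀ l', l' <+: l → -(d : ℤ) ≤ slack p l'

lemma IsWeakPath.length_eq {d n : ℕ} {l : List Bool} (h : IsWeakPath p d n l) :
    l.length = (p + 1) * n + d := by
  obtain ⟨rfl, hs, -⟩ := h
  have := count_false_add_count_true l
  simp only [slack] at hs
  zify
  linarith

instance (d n : ℕ) : Finite {l // IsWeakPath p d n l} :=
  ((finite_length_eq Bool ((p + 1) * n + d)).subset
    fun l (h : IsWeakPath p d n l) => h.length_eq).to_subtype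

lemma isWeakPath_iff_count_take {d n : ℕ} {l : List Bool} (hl : l.length = (p + 1) * n + d) :
    IsWeakPath p d n l ↔ l.count true = p * n + d ∧
      ∀ k ≤ l.length, (l.take k).count true ≤ p * (l.take k).count false + d := by
  have hsum := count_false_add_count_true l
  have hslack (l' : List Bool) : slack p l' = p * l'.count false - l'.count true := rfl
  constructor
  · rintro ⟨hn, hs, hpre⟩
    refine ⟨by rw [hslack, hn] at hs; omega, fun k _ => ?_⟩
    have := hpre _ (take_prefix k l)
    rw [hslack] at this
    omega
  · rintro ⟨ht, hk⟩
    have hn : l.count false = n := by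
      have : (p + 1) * n = p * n + n := by ring
      omega
    refine ⟨hn, by rw [hslack, hn, ht]; push_cast; ring, fun l' hl' => ?_⟩
    have := hk _ hl'.length_le
    rw [← prefix_iff_eq_take.mp hl'] at this
    rw [hslack]
    omega

lemma exists_eq_append_true_cons_of_slack_neg {l : List Bool} (hl : slack p l < 0) :
    ∃ l₁ l₂, l = l₁ ++ true :: l₂ ∧ IsWeakPath p 0 (l₁.count false) l₁ := by
  -- `c` is the slack accumulated before `l`
  suffices key : ∀ c : ℤ, 0 ≤ c → c + slack p l < 0 → ∃ l₁ l₂, l = l₁ ++ true :: l₂ ∧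
      c + slack p l₁ = 0 ∧ ∀ l', l' <+: l₁ → 0 ≤ c + slack p l' by
    obtain ⟨l₁, l₂, rfl, h₀, hpre⟩ := key 0 le_rfl (by simpa using hl)
    exact ⟨l₁, l₂, rfl, rfl, by simpa using h₀, by simpa using hpre⟩
  clear hl
  induction l with
  | nil => intro c hc h; simp at h; omega
  | cons b t ih =>
    intro c hc h
    by_cases hstop : b = true ∧ c = 0
    · obtain ⟨rfl, rfl⟩ := hstop
      exact ⟨[], t, rfl, by simp, by simp⟩
    · have hc' : 0 ≤ c + (if b then -1 else (p : ℤ)) := by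
        cases b <;> simp at hstop ⊢ <;> omega
      obtain ⟨l₁, l₂, rfl, h₀, hpre⟩ := ih _ hc' (by simp at h; linarith)
      refine ⟨b :: l₁, l₂, rfl, by simp; linarith, fun l' hl' => ?_⟩
      rcases prefix_cons_iff.mp hl' with rfl | ⟨t', rfl, ht'⟩
      · simpa using hc
      · have := hpre t' ht'
        simp only [slack_cons]
        linarith

lemma IsWeakPath.append_true_cons {d m q : ℕ} {l₁ l₂ : List Bool}
    (h₁ : IsWeakPath p 0 m l₁) (h₂ : IsWeakPath p d q l₂) :
    IsWeakPath p (d + 1) (m + q) (l₁ ++ true :: l₂) := by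
  obtain ⟨hm, hs₁, hpre₁⟩ := h₁
  obtain ⟨hq, hs₂, hpre₂⟩ := h₂
  refine ⟨by simp [hm, hq], by simp [hs₁, hs₂], fun l' hl' => ?_⟩
  rcases prefix_append_iff.mp hl' with hl' | ⟨t, rfl, ht⟩
  · have := hpre₁ l' hl'
    push_cast at this ⊢
    linarith
  · rcases prefix_cons_iff.mp ht with rfl | ⟨t', rfl, ht'⟩
    · simp [hs₁]
    · have := hpre₂ t' ht'
      simp [hs₁]
      linarith

lemma IsWeakPath.of_append_true_cons {d n : ℕ} {l₁ l₂ : List Bool}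
    (h : IsWeakPath p (d + 1) n (l₁ ++ true :: l₂)) (h₁ : slack p l₁ = 0) :
    IsWeakPath p d (l₂.count false) l₂ := by
  obtain ⟨-, hs, hpre⟩ := h
  refine ⟨rfl, by simp [h₁] at hs; linarith, fun l' hl' => ?_⟩
  have := hpre (l₁ ++ true :: l') (by simpa using hl')
  simp [h₁] at this
  linarith

lemma eq_of_append_true_cons_eq {m m' : ℕ} {l₁ l₂ l₁' l₂' : List Bool}
    (h₁ : IsWeakPath p 0 m l₁) (h₁' : IsWeakPath p 0 m' l₁')
    (h : l₁ ++ true :: l₂ = l₁' ++ true :: l₂') : l₁ = l₁' ∧ l₂ = l₂' := by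
  wlog hle : l₁.length ≤ l₁'.length generalizing l₁ l₂ l₁' l₂' m m'
  · exact (this h₁' h₁ h.symm (by omega)).imp Eq.symm Eq.symm
  suffices hlen : l₁.length = l₁'.length by
    simpa using List.append_inj h hlen
  by_contra hne
  have hpre : l₁ ++ [true] <+: l₁' :=
    prefix_of_prefix_length_le (l₃ := l₁' ++ true :: l₂') (by simp [← h]) (prefix_append _ _)
      (by simp; omega)
  have := h₁'.2.2 _ hpre
  simp [h₁.2.1] at this

lemma card_isWeakPath_succ (d n : ℕ) :
    Nat.card {l // IsWeakPath p (d + 1) n l} = ∑ x ∈ antidiagonal n,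
      Nat.card {l // IsWeakPath p 0 x.1 l} * Nat.card {l // IsWeakPath p d x.2 l} := by
  let join : (Σ x : antidiagonal n, {l // IsWeakPath p 0 x.1.1 l} × {l // IsWeakPath p d x.1.2 l})
      → {l // IsWeakPath p (d + 1) n l} := fun ⟨x, l₁, l₂⟩ =>
    ⟨l₁.1 ++ true :: l₂.1, by
      have h := l₁.2.append_true_cons l₂.2
      rwa [mem_antidiagonal.mp x.2] at h⟩
  have hjoin : Function.Bijective join := by
    constructor
    · rintro ⟨⟨⟨m, q⟩, hx⟩, ⟨l₁, h₁⟩, ⟨l₂, h₂⟩⟩ ⟨⟨⟨m', q'⟩, hx'⟩, ⟨l₁', h₁'⟩, ⟨l₂', h₂'⟩⟩ h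
      obtain ⟨rfl, rfl⟩ := eq_of_append_true_cons_eq h₁ h₁' (congrArg Subtype.val h)
      obtain rfl : m = m' := h₁.1.symm.trans h₁'.1
      obtain rfl : q = q' := h₂.1.symm.trans h₂'.1
      rfl
    · rintro ⟨l, hl⟩
      obtain ⟨l₁, l₂, rfl, h₁⟩ :=
        exists_eq_append_true_cons_of_slack_neg (hl.2.1.trans_lt (by omega))
      have h₂ := hl.of_append_true_cons h₁.2.1
      have hn : l₁.count false + l₂.count false = n := by simpa using hl.1
      exact ⟨⟨⟨(l₁.count false, l₂.count false), mem_antidiagonal.mpr hn⟩, ⟨l₁, h₁⟩, ⟨l₂, h₂⟩⟩,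
        rfl⟩
  rw [← Nat.card_eq_of_bijective join hjoin, Nat.card_sigma]
  simp only [Nat.card_prod]
  exact sum_coe_sort _ fun x : ℕ × ℕ =>
    Nat.card {l // IsWeakPath p 0 x.1 l} * Nat.card {l // IsWeakPath p d x.2 l}

end LatticePath

open LatticePath

lemma weakCount_eq_card_isWeakPath (p d n : ℕ) :
    weakCount p d n = Nat.card {l // IsWeakPath p d n l} := by
  rw [weakCount, ← Nat.card_subtype_ofFn _ fun _ h => IsWeakPath.length_eq h]
  refine Nat.card_congr (Equiv.subtypeEquivRight fun f => ?_)
  rw [isWeakPath_iff_count_take (by simp)]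
  simp only [upsIn, rightsIn, ← List.count_take_ofFn, List.length_ofFn, le_refl,
    List.take_of_length_le]

lemma weakCount_succ (p d n : ℕ) :
    weakCount p (d + 1) n = ∑ x ∈ antidiagonal n, weakCount p 0 x.1 * weakCount p d x.2 := by
  simp only [weakCount_eq_card_isWeakPath]
  exact card_isWeakPath_succ d n

/-- Weights a path by `u` per up-step and `v` per right-step, counting the final up-step
that crosses the line. -/
noncomputable def weakSeries (p d : ℕ) (u v : ℝ≥0∞) : ℝ≥0∞ :=
  ∑' n, (weakCount p d n : ℝ≥0∞) * u ^ (p * n + d + 1) * v ^ n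

lemma weakSeries_succ (p d : ℕ) (u v : ℝ≥0∞) :
    weakSeries p (d + 1) u v = weakSeries p 0 u v * weakSeries p d u v := by
  rw [weakSeries, weakSeries, weakSeries, ENNReal.tsum_mul_tsum_eq_tsum_sum_antidiagonal]
  refine tsum_congr fun n => ?_
  rw [weakCount_succ, Nat.cast_sum, sum_mul, sum_mul]
  refine sum_congr rfl fun x hx => ?_
  obtain rfl := mem_antidiagonal.mp hx
  push_cast
  ring

lemma weakSeries_eq_pow (p d : ℕ) (u v : ℝ≥0∞) :
    weakSeries p d u v = weakSeries p 0 u v ^ (d + 1) := by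
  induction d with
  | zero => rw [pow_one]
  | succ d ih => rw [weakSeries_succ, ih, ← pow_succ']

lemma crossProb_eq_toReal_weakSeries {β : ℝ} (hβ : 0 ≤ β) (p d : ℕ) :
    crossProb β p d =
      (weakSeries p d (ENNReal.ofReal (β / (β + 1))) (ENNReal.ofReal (1 / (β + 1)))).toReal := by
  rw [weakSeries, ENNReal.tsum_toReal_eq fun n => by finiteness, crossProb]
  refine tsum_congr fun n => ?_
  rw [toReal_mul, toReal_mul, toReal_pow, toReal_pow, toReal_ofReal (by positivity),
    toReal_ofReal (by positivity), toReal_natCast, div_pow, one_div_pow]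
  field_simp
  ring

theorem crossProb_eq_pow_general (β : ℝ) (hβ : 0 < β) (p : ℕ) (d : ℕ) :
    crossProb β p d = (crossProb β p 0) ^ (d + 1) := by
  rw [crossProb_eq_toReal_weakSeries hβ.le, crossProb_eq_toReal_weakSeries hβ.le,
    weakSeries_eq_pow, toReal_pow]

theorem crossProb_eq_pow (β : ℝ) (hβ : 0 < β) (p : ℕ) (hp : 1 ≤ p) (d : ℕ) :
    crossProb β p d = (crossProb β p 0) ^ (d + 1) :=
  crossProb_eq_pow_general β hβ p d
end

section
/- For each β > 0, let α_β = sup{α > 0 : the β-biased monotonic random walk crosses y = αx with probability 1}. Then ⌊β⌋ ≤ α_β ≤ ⌊β⌋ + 1. In particular, with p = ⌊β⌋ ≥ 1 and β not an integer, the polynomial f(y) = y^{p+1} + y^p + ⋯ + y − β has a root in (0,1). -/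
/-- The number of monotonic lattice paths from `(0,0)` to `(n, ⌊α n⌋)` all of whose
lattice points lie weakly below the line `y = α x`. -/
noncomputable def weakCountR (α : ℝ) (n : ℕ) : ℕ :=
  Nat.card {f : Fin (n + ⌊α * n⌋₊) → Bool //
    upsIn f (n + ⌊α * n⌋₊) = ⌊α * n⌋₊ ∧
    ∀ k ≤ n + ⌊α * n⌋₊, (upsIn f k : ℝ) ≤ α * rightsIn f k}

/-- `crossProbR β α` is the probability `Φ_β(α,0)` that the `β`-biased monotonic random
walk starting at the origin (moving right with probability `1/(β+1)` and up with
probability `β/(β+1)`) crosses the line `y = α x`, i.e. reaches a lattice point strictly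
above it; decomposing by the first lattice point strictly above the line, which is of the
form `(n, ⌊α n⌋ + 1)`, gives this series. -/
noncomputable def crossProbR (β α : ℝ) : ℝ :=
  ∑' n : ℕ, (weakCountR α n : ℝ) * β ^ (⌊α * n⌋₊ + 1) / (β + 1) ^ (n + ⌊α * n⌋₊ + 1)
/-!
Give up-steps weight `u` and right-steps weight `r` with `u + r = 1`. Sorting the paths of length
`T` by their first lattice point strictly above `y = α x`, which is some `(n, ⌊α n⌋ + 1)`, gives
`crossedWeight + belowWeight = 1`, where `belowWeight` is the weight of the paths staying weakly
below the line. For `u = β / (β + 1)`, `r = 1 / (β + 1)` the series `crossProbR β α` is therefore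
at most `1`, and it equals `1` as soon as `belowWeight → 0`.

For `α < β`, tilting the weights to `u θ⁻¹, r θ ^ α` can only increase the weight of a path below
the line, and for a suitable `θ > 1` the tilted weights add up to less than `1`, so `belowWeight`
decays geometrically. For `α > β`, the tilt `u θ, r θ ^ (-γ)` with `β < γ < α` multiplies every
term of the series by at least a fixed `θ ^ δ > 1`, while the tilted series is still at most `1`;
so `crossProbR β α < 1`. The critical slope is thus `β`, which lies between `⌊β⌋` and `⌊β⌋ + 1`.
-/

open Finset Filter Topology

variable {T : ℕ}

lemma upsIn_snoc (f : Fin T → Bool) (b : Bool) (k : ℕ) :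
    upsIn (Fin.snoc f b : Fin (T + 1) → Bool) k =
      upsIn f k + if T < k ∧ b = true then 1 else 0 := by
  simp only [upsIn, card_filter, Fin.sum_univ_castSucc, Fin.snoc_castSucc, Fin.snoc_last,
    Fin.val_castSucc, Fin.val_last]

lemma rightsIn_snoc (f : Fin T → Bool) (b : Bool) (k : ℕ) :
    rightsIn (Fin.snoc f b : Fin (T + 1) → Bool) k =
      rightsIn f k + if T < k ∧ b = false then 1 else 0 := by
  simp only [rightsIn, card_filter, Fin.sum_univ_castSucc, Fin.snoc_castSucc, Fin.snoc_last,
    Fin.val_castSucc, Fin.val_last]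

lemma upsIn_of_length_le {L k : ℕ} (f : Fin L → Bool) (hk : L ≤ k) : upsIn f k = upsIn f L := by
  simp only [upsIn, Fin.is_lt, true_and, fun i : Fin L => i.2.trans_le hk]

lemma rightsIn_of_length_le {L k : ℕ} (f : Fin L → Bool) (hk : L ≤ k) :
    rightsIn f k = rightsIn f L := by
  simp only [rightsIn, Fin.is_lt, true_and, fun i : Fin L => i.2.trans_le hk]

lemma upsIn_snoc_length (f : Fin T → Bool) (b : Bool) :
    upsIn (Fin.snoc f b : Fin (T + 1) → Bool) (T + 1) = upsIn f T + if b then 1 else 0 := by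
  simp [upsIn_snoc, upsIn_of_length_le f T.le_succ]

lemma rightsIn_snoc_length (f : Fin T → Bool) (b : Bool) :
    rightsIn (Fin.snoc f b : Fin (T + 1) → Bool) (T + 1) = rightsIn f T + if b then 0 else 1 := by
  cases b <;> simp [rightsIn_snoc, rightsIn_of_length_le f T.le_succ]

lemma upsIn_add_rightsIn {L k : ℕ} (f : Fin L → Bool) (hk : k ≤ L) :
    upsIn f k + rightsIn f k = k := by
  rw [upsIn, rightsIn, ← card_union_of_disjoint, ← filter_or]
  · simpa [← and_or_left, Bool.eq_false_or_eq_true, hk] using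
      Fin.card_filter_val_lt (n := L) (m := k)
  · exact disjoint_filter.2 fun i _ h₁ h₂ => by simp_all

lemma sum_fin_snoc {M : Type*} [AddCommMonoid M] (F : (Fin (T + 1) → Bool) → M) :
    ∑ g, F g = ∑ f : Fin T → Bool, (F (Fin.snoc f true) + F (Fin.snoc f false)) := by
  rw [← (Fin.snocEquiv fun _ => Bool).sum_comp F, Fintype.sum_prod_type_right]
  simp [Fin.snocEquiv, add_comm]

def pathWeight (u r : ℝ) (f : Fin T → Bool) : ℝ :=
  u ^ upsIn f T * r ^ rightsIn f T

lemma pathWeight_snoc (u r : ℝ) (f : Fin T → Bool) (b : Bool) :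
    pathWeight u r (Fin.snoc f b : Fin (T + 1) → Bool) =
      pathWeight u r f * if b then u else r := by
  cases b <;> simp [pathWeight, upsIn_snoc_length, rightsIn_snoc_length, pow_succ] <;> ring

lemma sum_pathWeight (u r : ℝ) (T : ℕ) :
    ∑ f : Fin T → Bool, pathWeight u r f = (u + r) ^ T := by
  induction T with
  | zero => simp [pathWeight, upsIn, rightsIn]
  | succ T ih =>
    simp only [sum_fin_snoc, pathWeight_snoc, ← mul_add, ← sum_mul, ih, pow_succ, if_true,
      Bool.false_eq_true, if_false]

def StaysBelow (α : ℝ) (f : Fin T → Bool) : Prop :=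
  ∀ k ≤ T, (upsIn f k : ℝ) ≤ α * rightsIn f k

lemma staysBelow_snoc_iff {α : ℝ} (f : Fin T → Bool) (b : Bool) :
    StaysBelow α (Fin.snoc f b : Fin (T + 1) → Bool) ↔ StaysBelow α f ∧
      (upsIn (Fin.snoc f b : Fin (T + 1) → Bool) (T + 1) : ℝ) ≤
        α * rightsIn (Fin.snoc f b : Fin (T + 1) → Bool) (T + 1) := by
  have hprefix : ∀ k ≤ T, upsIn (Fin.snoc f b : Fin (T + 1) → Bool) k = upsIn f k ∧
      rightsIn (Fin.snoc f b : Fin (T + 1) → Bool) k = rightsIn f k := fun k hk => by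
    simp [upsIn_snoc, rightsIn_snoc, Nat.not_lt.2 hk]
  constructor
  · intro h
    refine ⟨fun k hk => ?_, h _ le_rfl⟩
    simpa only [hprefix k hk] using h k (hk.trans T.le_succ)
  · rintro ⟨h, hlast⟩ k hk
    rcases Nat.of_le_succ hk with hk | rfl
    · simpa only [hprefix k hk] using h k hk
    · exact hlast

lemma staysBelow_snoc_true {α : ℝ} (f : Fin T → Bool) :
    StaysBelow α (Fin.snoc f true : Fin (T + 1) → Bool) ↔
      StaysBelow α f ∧ (upsIn f T : ℝ) + 1 ≤ α * rightsIn f T := by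
  simp [staysBelow_snoc_iff, upsIn_snoc_length, rightsIn_snoc_length]

lemma staysBelow_snoc_false {α : ℝ} (hα : 0 ≤ α) (f : Fin T → Bool) :
    StaysBelow α (Fin.snoc f false : Fin (T + 1) → Bool) ↔ StaysBelow α f := by
  simp only [staysBelow_snoc_iff, upsIn_snoc_length, rightsIn_snoc_length, and_iff_left_iff_imp]
  intro h
  have := h T le_rfl
  push_cast
  nlinarith

section Decomposition

open scoped Classical

variable {α u r : ℝ}

def CrossesOnUpStep (α : ℝ) (f : Fin T → Bool) : Prop :=
  StaysBelow α f ∧ α * rightsIn f T < upsIn f T + 1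

noncomputable def belowWeight (α u r : ℝ) (T : ℕ) : ℝ :=
  ∑ f : Fin T → Bool, if StaysBelow α f then pathWeight u r f else 0

/-- The weight of the paths whose first lattice point strictly above `y = α x` is
`(n, ⌊α n⌋ + 1)`. -/
noncomputable def crossTerm (α u r : ℝ) (n : ℕ) : ℝ :=
  weakCountR α n * u ^ (⌊α * n⌋₊ + 1) * r ^ n

noncomputable def crossedWeight (α u r : ℝ) (T : ℕ) : ℝ :=
  ∑ n ∈ range T, if n + ⌊α * n⌋₊ < T then crossTerm α u r n else 0

lemma belowWeight_succ (hα : 0 ≤ α) (T : ℕ) :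
    belowWeight α u r (T + 1) = (u + r) * belowWeight α u r T -
      u * ∑ f : Fin T → Bool, if CrossesOnUpStep α f then pathWeight u r f else 0 := by
  rw [belowWeight, sum_fin_snoc, belowWeight, mul_sum, mul_sum, ← sum_sub_distrib]
  refine sum_congr rfl fun f _ => ?_
  simp only [staysBelow_snoc_true, staysBelow_snoc_false hα, pathWeight_snoc, CrossesOnUpStep]
  by_cases hbelow : StaysBelow α f <;> by_cases hnext : α * rightsIn f T < upsIn f T + 1
  · simp [hbelow, hnext, not_le.2 hnext]; ring
  · simp [hbelow, hnext, not_lt.1 hnext]; ring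
  all_goals simp [hbelow]

lemma crossesOnUpStep_and_rightsIn_eq_iff (hα : 0 ≤ α) (f : Fin T → Bool) (n : ℕ) :
    CrossesOnUpStep α f ∧ rightsIn f T = n ↔
      n + ⌊α * n⌋₊ = T ∧ upsIn f T = ⌊α * n⌋₊ ∧ StaysBelow α f := by
  have hsum := upsIn_add_rightsIn f le_rfl
  constructor
  · rintro ⟨⟨hbelow, hnext⟩, rfl⟩
    have hfloor : ⌊α * rightsIn f T⌋₊ = upsIn f T :=
      (Nat.floor_eq_iff (by positivity)).2 ⟨hbelow T le_rfl, hnext⟩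
    exact ⟨by omega, hfloor.symm, hbelow⟩
  · rintro ⟨hT, hups, hbelow⟩
    obtain rfl : rightsIn f T = n := by omega
    exact ⟨⟨hbelow, hups ▸ Nat.lt_floor_add_one _⟩, rfl⟩

lemma weakCountR_eq_card (α : ℝ) (n : ℕ) :
    weakCountR α n = #{f : Fin (n + ⌊α * n⌋₊) → Bool |
      upsIn f (n + ⌊α * n⌋₊) = ⌊α * n⌋₊ ∧ StaysBelow α f} := by
  rw [weakCountR, Nat.card_eq_fintype_card, Fintype.card_subtype]
  simp only [StaysBelow]
  congr

lemma sum_crossesOnUpStep_rightsIn_eq (hα : 0 ≤ α) (n : ℕ) :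
    ∑ f : Fin T → Bool,
        (if CrossesOnUpStep α f ∧ rightsIn f T = n then pathWeight u r f else 0) =
      if n + ⌊α * n⌋₊ = T then weakCountR α n * u ^ ⌊α * n⌋₊ * r ^ n else 0 := by
  simp only [crossesOnUpStep_and_rightsIn_eq_iff hα]
  split_ifs with hT
  · subst hT
    simp only [true_and]
    rw [← sum_filter, weakCountR_eq_card, mul_assoc, ← nsmul_eq_mul, ← sum_const]
    refine sum_congr rfl fun f hf => ?_
    have hsum := upsIn_add_rightsIn f le_rfl
    rw [mem_filter] at hf
    rw [pathWeight, hf.2.1, (by omega : rightsIn f _ = n)]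
  · exact sum_eq_zero fun f _ => if_neg fun h => hT h.1

lemma mul_sum_crossesOnUpStep (hα : 0 ≤ α) (T : ℕ) :
    u * ∑ f : Fin T → Bool, (if CrossesOnUpStep α f then pathWeight u r f else 0) =
      ∑ n ∈ range (T + 1), if n + ⌊α * n⌋₊ = T then crossTerm α u r n else 0 := by
  have hsplit : ∀ f : Fin T → Bool, (if CrossesOnUpStep α f then pathWeight u r f else 0) =
      ∑ n ∈ range (T + 1),
        if CrossesOnUpStep α f ∧ rightsIn f T = n then pathWeight u r f else 0 := by
    intro f
    have hsum := upsIn_add_rightsIn f le_rfl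
    by_cases hC : CrossesOnUpStep α f <;>
      simp [hC, Nat.lt_succ_of_le (by omega : rightsIn f T ≤ T)]
  simp only [hsplit, sum_comm (s := univ), sum_crossesOnUpStep_rightsIn_eq hα, mul_sum]
  refine sum_congr rfl fun n _ => ?_
  split_ifs
  · rw [crossTerm, pow_succ]
    ring
  · exact mul_zero u

lemma crossedWeight_succ (T : ℕ) :
    crossedWeight α u r (T + 1) = crossedWeight α u r T +
      ∑ n ∈ range (T + 1), if n + ⌊α * n⌋₊ = T then crossTerm α u r n else 0 := by
  have hsplit : ∀ n : ℕ, (if n + ⌊α * n⌋₊ < T + 1 then crossTerm α u r n else 0) =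
      (if n + ⌊α * n⌋₊ < T then crossTerm α u r n else 0) +
        if n + ⌊α * n⌋₊ = T then crossTerm α u r n else 0 := by
    intro n
    split_ifs <;> first | omega | simp
  rw [crossedWeight, sum_congr rfl fun n _ => hsplit n, sum_add_distrib, sum_range_succ,
    if_neg (by omega), add_zero, crossedWeight]

theorem crossedWeight_add_belowWeight (hα : 0 ≤ α) (hur : u + r = 1) (T : ℕ) :
    crossedWeight α u r T + belowWeight α u r T = 1 := by
  induction T with
  | zero => simp [crossedWeight, belowWeight, StaysBelow, pathWeight, upsIn, rightsIn]
  | succ T ih =>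
    rw [crossedWeight_succ, belowWeight_succ hα, ← mul_sum_crossesOnUpStep hα, hur, one_mul]
    linarith

end Decomposition

section Series

variable {α u r : ℝ}

lemma crossTerm_nonneg (hu : 0 ≤ u) (hr : 0 ≤ r) (n : ℕ) : 0 ≤ crossTerm α u r n := by
  unfold crossTerm
  positivity

lemma belowWeight_nonneg (hu : 0 ≤ u) (hr : 0 ≤ r) (T : ℕ) : 0 ≤ belowWeight α u r T :=
  sum_nonneg fun f _ => by
    unfold pathWeight
    split_ifs <;> positivity

lemma sum_range_crossTerm_le_one (hα : 0 ≤ α) (hu : 0 ≤ u) (hr : 0 ≤ r) (hur : u + r = 1)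
    (K : ℕ) : ∑ n ∈ range K, crossTerm α u r n ≤ 1 := by
  set T := K + ⌊α * K⌋₊ + 1
  have hcrossed : ∀ n ∈ range K, n + ⌊α * n⌋₊ < T := fun n hn => by
    have hn := mem_range.1 hn
    have : ⌊α * n⌋₊ ≤ ⌊α * K⌋₊ := Nat.floor_le_floor (by gcongr)
    omega
  calc ∑ n ∈ range K, crossTerm α u r n
      = ∑ n ∈ range K, if n + ⌊α * n⌋₊ < T then crossTerm α u r n else 0 :=
        sum_congr rfl fun n hn => (if_pos (hcrossed n hn)).symm
    _ ≤ crossedWeight α u r T :=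
        sum_le_sum_of_subset_of_nonneg (range_mono (by omega)) fun n _ _ => by
          split_ifs
          exacts [crossTerm_nonneg hu hr n, le_rfl]
    _ ≤ 1 := by
        linarith [crossedWeight_add_belowWeight hα hur T, belowWeight_nonneg (α := α) hu hr T]

lemma summable_crossTerm (hα : 0 ≤ α) (hu : 0 ≤ u) (hr : 0 ≤ r) (hur : u + r = 1) :
    Summable (crossTerm α u r) :=
  summable_of_sum_range_le (crossTerm_nonneg hu hr) (sum_range_crossTerm_le_one hα hu hr hur)

lemma tsum_crossTerm_le_one (hα : 0 ≤ α) (hu : 0 ≤ u) (hr : 0 ≤ r) (hur : u + r = 1) :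
    ∑' n, crossTerm α u r n ≤ 1 :=
  Real.tsum_le_of_sum_range_le (crossTerm_nonneg hu hr) (sum_range_crossTerm_le_one hα hu hr hur)

lemma tsum_crossTerm_eq_one_of_tendsto (hα : 0 ≤ α) (hu : 0 ≤ u) (hr : 0 ≤ r)
    (hur : u + r = 1) (hbelow : Tendsto (belowWeight α u r) atTop (𝓝 0)) :
    ∑' n, crossTerm α u r n = 1 := by
  have hlim : Tendsto (fun T => 1 - belowWeight α u r T) atTop (𝓝 1) := by
    simpa using (tendsto_const_nhds (x := (1 : ℝ))).sub hbelow
  refine le_antisymm (tsum_crossTerm_le_one hα hu hr hur) (le_of_tendsto' hlim fun T => ?_)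
  calc 1 - belowWeight α u r T = crossedWeight α u r T := by
        linarith [crossedWeight_add_belowWeight hα hur T]
    _ ≤ ∑ n ∈ range T, crossTerm α u r n := sum_le_sum fun n _ => by
        split_ifs
        exacts [le_rfl, crossTerm_nonneg hu hr n]
    _ ≤ ∑' n, crossTerm α u r n :=
        (summable_crossTerm hα hu hr hur).sum_le_tsum _ fun n _ => crossTerm_nonneg hu hr n

lemma pathWeight_mul_rpow {θ : ℝ} (hθ : 0 < θ) (a b : ℝ) (f : Fin T → Bool) :
    pathWeight (u * θ ^ a) (r * θ ^ b) f =
      pathWeight u r f * θ ^ (a * upsIn f T + b * rightsIn f T) := by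
  rw [pathWeight, pathWeight, mul_pow, mul_pow, Real.rpow_add hθ, Real.rpow_mul_natCast hθ.le,
    Real.rpow_mul_natCast hθ.le]
  ring

lemma crossTerm_mul_rpow {θ : ℝ} (hθ : 0 < θ) (a b : ℝ) (n : ℕ) :
    crossTerm α (u * θ ^ a) (r * θ ^ b) n =
      crossTerm α u r n * θ ^ (a * (⌊α * n⌋₊ + 1 : ℕ) + b * n) := by
  rw [crossTerm, crossTerm, mul_pow, mul_pow, Real.rpow_add hθ, Real.rpow_mul_natCast hθ.le,
    Real.rpow_mul_natCast hθ.le]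
  ring

/-- Exponential tilting: on a path weakly below the line, `θ ^ (α * rights - ups) ≥ 1`. -/
lemma belowWeight_le_tilt (hu : 0 ≤ u) (hr : 0 ≤ r) {θ : ℝ} (hθ : 1 ≤ θ) (T : ℕ) :
    belowWeight α u r T ≤ (u * θ⁻¹ + r * θ ^ α) ^ T := by
  have hθ0 : 0 < θ := zero_lt_one.trans_le hθ
  rw [← Real.rpow_neg_one, ← sum_pathWeight]
  refine sum_le_sum fun f _ => ?_
  rw [pathWeight_mul_rpow hθ0]
  have hW : 0 ≤ pathWeight u r f := by unfold pathWeight; positivity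
  split_ifs with hbelow
  · refine le_mul_of_one_le_right hW (Real.one_le_rpow hθ ?_)
    linarith [hbelow T le_rfl]
  · positivity

lemma le_natCast_floor_add_one_sub_mul {α γ δ : ℝ} (hδ0 : 0 ≤ δ) (hδ1 : δ ≤ 1)
    (hδγ : δ ≤ α - γ) (n : ℕ) :
    δ ≤ ((⌊α * n⌋₊ + 1 : ℕ) : ℝ) - γ * n := by
  rcases n.eq_zero_or_pos with rfl | hn
  · simpa using hδ1
  · have hfloor := Nat.lt_floor_add_one (α * n)
    have hn1 : (1 : ℝ) ≤ n := by exact_mod_cast hn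
    push_cast
    nlinarith

lemma tsum_crossTerm_mul_rpow_le_one (hα : 0 ≤ α) (hu : 0 ≤ u) (hr : 0 ≤ r) (hur : u + r = 1)
    {θ γ δ : ℝ} (hθ : 1 ≤ θ) (hδ : ∀ n : ℕ, δ ≤ ((⌊α * n⌋₊ + 1 : ℕ) : ℝ) - γ * n)
    (htilt : u * θ + r * θ ^ (-γ) ≤ 1) :
    (∑' n, crossTerm α u r n) * θ ^ δ ≤ 1 := by
  have hθ0 : 0 < θ := zero_lt_one.trans_le hθ
  have hu' : 0 ≤ u * θ := by positivity
  have hr' : r * θ ^ (-γ) ≤ 1 - u * θ := by linarith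
  have hr'0 : 0 ≤ 1 - u * θ := by linarith [show 0 ≤ r * θ ^ (-γ) by positivity]
  have hterm : ∀ n, crossTerm α u r n * θ ^ δ ≤ crossTerm α (u * θ) (1 - u * θ) n := fun n => calc
    crossTerm α u r n * θ ^ δ
        ≤ crossTerm α u r n * θ ^ (1 * ((⌊α * n⌋₊ + 1 : ℕ) : ℝ) + -γ * n) := by
      gcongr
      · exact crossTerm_nonneg hu hr n
      · linarith [hδ n]
    _ = crossTerm α (u * θ) (r * θ ^ (-γ)) n := by rw [← crossTerm_mul_rpow hθ0, Real.rpow_one]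
    _ ≤ crossTerm α (u * θ) (1 - u * θ) n := by
      unfold crossTerm
      gcongr
  calc (∑' n, crossTerm α u r n) * θ ^ δ = ∑' n, crossTerm α u r n * θ ^ δ := tsum_mul_right.symm
    _ ≤ ∑' n, crossTerm α (u * θ) (1 - u * θ) n :=
        ((summable_crossTerm hα hu hr hur).mul_right _).tsum_le_tsum hterm
          (summable_crossTerm hα hu' hr'0 (by ring))
    _ ≤ 1 := tsum_crossTerm_le_one hα hu' hr'0 (by ring)

lemma crossProbR_eq_tsum_crossTerm (β α : ℝ) :
    crossProbR β α = ∑' n, crossTerm α (β / (β + 1)) (1 / (β + 1)) n := by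
  unfold crossProbR crossTerm
  congr 1
  ext n
  simp only [div_eq_mul_inv, one_mul, mul_pow, ← inv_pow]
  ring

end Series

lemma exists_one_lt_mul_rpow_add_rpow_lt {β a b : ℝ} (h : β * a + b < 0) :
    ∃ θ > 1, β * θ ^ a + θ ^ b < β + 1 := by
  have hderiv : HasDerivAt (fun θ : ℝ => β * θ ^ a + θ ^ b) (β * a + b) 1 := by
    simpa using
      ((Real.hasDerivAt_rpow_const (p := a) (Or.inl one_ne_zero)).const_mul β).fun_add
        (Real.hasDerivAt_rpow_const (p := b) (Or.inl one_ne_zero))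
  obtain ⟨θ, hslope, hθ⟩ := ((hderiv.hasDerivWithinAt (s := Set.Ioi 1)).limsup_slope_le'
    (lt_irrefl 1) h |>.and self_mem_nhdsWithin).exists
  refine ⟨θ, hθ, ?_⟩
  rw [slope_def_field, div_lt_iff₀ (sub_pos.2 hθ)] at hslope
  simpa using hslope

section CriticalSlope

variable {α β : ℝ}

theorem crossProbR_eq_one_of_lt (hα : 0 ≤ α) (hαβ : α < β) : crossProbR β α = 1 := by
  have hβ : 0 < β := hα.trans_lt hαβ
  obtain ⟨θ, hθ, hθβ⟩ := exists_one_lt_mul_rpow_add_rpow_lt (β := β) (a := -1) (b := α)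
    (by linarith)
  rw [Real.rpow_neg_one] at hθβ
  have hρ : β / (β + 1) * θ⁻¹ + 1 / (β + 1) * θ ^ α < 1 := by
    calc _ = (β * θ⁻¹ + θ ^ α) / (β + 1) := by ring
      _ < 1 := (div_lt_one (by positivity)).2 hθβ
  have hbelow : Tendsto (belowWeight α (β / (β + 1)) (1 / (β + 1))) atTop (𝓝 0) :=
    squeeze_zero (belowWeight_nonneg (by positivity) (by positivity))
      (belowWeight_le_tilt (by positivity) (by positivity) hθ.le)
      (tendsto_pow_atTop_nhds_zero_of_lt_one (by positivity) hρ)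
  rw [crossProbR_eq_tsum_crossTerm]
  exact tsum_crossTerm_eq_one_of_tendsto hα (by positivity) (by positivity) (by field_simp) hbelow

theorem crossProbR_lt_one_of_lt (hβ : 0 < β) (hβα : β < α) : crossProbR β α < 1 := by
  obtain ⟨γ, hβγ, hγα⟩ := exists_between hβα
  obtain ⟨θ, hθ, hθβ⟩ := exists_one_lt_mul_rpow_add_rpow_lt (β := β) (a := 1) (b := -γ)
    (by linarith)
  rw [Real.rpow_one] at hθβ
  have htilt : β / (β + 1) * θ + 1 / (β + 1) * θ ^ (-γ) ≤ 1 :=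
    calc _ = (β * θ + θ ^ (-γ)) / (β + 1) := by ring
      _ ≤ 1 := (div_le_one (by positivity)).2 hθβ.le
  have hδ : 0 < min 1 (α - γ) := lt_min one_pos (by linarith)
  have hbound := tsum_crossTerm_mul_rpow_le_one (by linarith) (by positivity) (by positivity)
    (by field_simp) hθ.le (le_natCast_floor_add_one_sub_mul hδ.le (min_le_left 1 (α - γ))
      (min_le_right 1 (α - γ))) htilt
  have hθδ : 1 < θ ^ min 1 (α - γ) := Real.one_lt_rpow hθ hδ
  have hnonneg : 0 ≤ ∑' n, crossTerm α (β / (β + 1)) (1 / (β + 1)) n :=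
    tsum_nonneg (crossTerm_nonneg (by positivity) (by positivity))
  rw [crossProbR_eq_tsum_crossTerm]
  nlinarith

theorem sSup_setOf_crossProbR_eq_one (hβ : 0 < β) :
    sSup {α : ℝ | 0 < α ∧ crossProbR β α = 1} = β := by
  refine csSup_eq_of_forall_le_of_forall_lt_exists_gt ⟨β / 2, by positivity,
    crossProbR_eq_one_of_lt (by positivity) (by linarith)⟩ (fun α ⟨hα, hα1⟩ => ?_) fun w hw => ?_
  · by_contra! hβα
    exact (crossProbR_lt_one_of_lt hβ hβα).ne hα1
  · refine ⟨(max w 0 + β) / 2, ⟨by positivity, crossProbR_eq_one_of_lt (by positivity) ?_⟩, ?_⟩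
    all_goals linarith [le_max_left w 0, max_lt hw hβ]

end CriticalSlope

lemma exists_mem_Ioo_sum_pow_eq {β : ℝ} (p : ℕ) (hβ : 0 < β) (hβp : β < p + 1) :
    ∃ y ∈ Set.Ioo (0 : ℝ) 1, ∑ i ∈ range (p + 1), y ^ (i + 1) = β :=
  intermediate_value_Ioo zero_le_one (by fun_prop) (by simpa using ⟨hβ, hβp⟩)

theorem floor_le_critical_slope (β : ℝ) (hβ : 0 < β) :
    (⌊β⌋₊ : ℝ) ≤ sSup {α : ℝ | 0 < α ∧ crossProbR β α = 1} ∧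
    sSup {α : ℝ | 0 < α ∧ crossProbR β α = 1} ≤ (⌊β⌋₊ : ℝ) + 1 ∧
    (1 ≤ ⌊β⌋₊ → (⌊β⌋₊ : ℝ) < β →
      ∃ y ∈ Set.Ioo (0 : ℝ) 1, ∑ i ∈ Finset.range (⌊β⌋₊ + 1), y ^ (i + 1) = β) := by
  rw [sSup_setOf_crossProbR_eq_one hβ]
  exact ⟨Nat.floor_le hβ.le, (Nat.lt_floor_add_one β).le,
    fun _ _ => exists_mem_Ioo_sum_pow_eq _ hβ (Nat.lt_floor_add_one β)⟩
end
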